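/- Trace inequality for rotated-Q1 IFE functions, uniform in the interface location (reference-element form, h = 1): there exists a constant C > 0 depending only on β⁻ and β⁺ such that for all d, e ∈ (0,1) and all coefficient vectors (c⁻, c⁺) satisfying the jump conditions (J1)–(J3), the associated piecewise rotated-Q1 function φ satisfies, for each of the four edges γ of T, ∫_γ (β ∂φ/∂ν)² ds ≤ C (β⁻ ∫_{T⁻} |∇p⁻|² dx dy + β⁺ ∫_{T⁺} |∇p⁺|² dx dy), where ν is the outward unit normal to T along γ, β equals β⁻ on T⁻ and β⁺ on T⁺, and on the two edges cut by the interface the integrand is taken piecewise (e.g. for the bottom edge: ∫₀^d (β⁻ ∂_y p⁻(x,0))² dx + ∫_d¹ (β⁺ ∂_y p⁺(x,0))² dx, and analogously with the cut point e on the top edge; on the uncut right and left edges the integrand is (β⁺ ∂_x p⁺(1,y))² and (β⁻ ∂_x p⁻(0,y))² respectively). -/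

import Mathlib

open MeasureTheory Set

noncomputable section

/-- The rotated-Q1 polynomial `c₁ + c₂ x + c₃ y + c₄ (x² − y²)` with coefficient
vector `c = (c 0, c 1, c 2, c 3)`. -/
def rq1 (c : Fin 4 → ℝ) (x y : ℝ) : ℝ :=
  c 0 + c 1 * x + c 2 * y + c 3 * (x ^ 2 - y ^ 2)

/-- The piecewise rotated-Q1 function on the reference Type II interface element:
`p⁻` where `x ≤ d + (e − d) y`, `p⁺` elsewhere. -/
def phiFn (d e : ℝ) (cm cp : Fin 4 → ℝ) (x y : ℝ) : ℝ :=
  if x ≤ d + (e - d) * y then rq1 cm x y else rq1 cp x y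

/-- Jump condition (J1): continuity at the interface points `D = (d,0)` and `E = (e,1)`. -/
def J1 (d e : ℝ) (cm cp : Fin 4 → ℝ) : Prop :=
  rq1 cm d 0 = rq1 cp d 0 ∧ rq1 cm e 1 = rq1 cp e 1

/-- Jump condition (J2): matching of the `x² − y²` coefficients. -/
def J2 (cm cp : Fin 4 → ℝ) : Prop := cm 3 = cp 3

/-- The flux defect `∫₀¹ (β⁺∇p⁺ − β⁻∇p⁻)((1−t)d + te, t) · (1, d − e) dt`. -/
def fluxDefect (βm βp d e : ℝ) (cm cp : Fin 4 → ℝ) : ℝ :=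
  ∫ t in (0:ℝ)..1,
    ((βp * (cp 1 + 2 * cp 3 * ((1 - t) * d + t * e))
        - βm * (cm 1 + 2 * cm 3 * ((1 - t) * d + t * e))) * 1
      + (βp * (cp 2 - 2 * cp 3 * t) - βm * (cm 2 - 2 * cm 3 * t)) * (d - e))

/-- Jump condition (J3): the integral over `DE` of the jump of the normal flux vanishes. -/
def J3 (βm βp d e : ℝ) (cm cp : Fin 4 → ℝ) : Prop :=
  fluxDefect βm βp d e cm cp = 0

/-- The four edge-mean (integral-value) degrees of freedom of `φ`:
bottom, right, top, left edges of `T = [0,1]²`. -/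
def dofI (d e : ℝ) (cm cp : Fin 4 → ℝ) : Fin 4 → ℝ :=
  ![(∫ x in (0:ℝ)..d, rq1 cm x 0) + ∫ x in d..(1:ℝ), rq1 cp x 0,
    ∫ y in (0:ℝ)..1, rq1 cp 1 y,
    (∫ x in (0:ℝ)..e, rq1 cm x 1) + ∫ x in e..(1:ℝ), rq1 cp x 1,
    ∫ y in (0:ℝ)..1, rq1 cm 0 y]

/-- The four midpoint-value degrees of freedom of `φ`:
values at the midpoints of the bottom, right, top, left edges of `T = [0,1]²`. -/
def dofP (d e : ℝ) (cm cp : Fin 4 → ℝ) : Fin 4 → ℝ :=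
  ![phiFn d e cm cp (1/2) 0, phiFn d e cm cp 1 (1/2),
    phiFn d e cm cp (1/2) 1, phiFn d e cm cp 0 (1/2)]

/-- The partial derivative `∂ₓᵃ∂ᵧᵇ` of the rotated-Q1 polynomial with coefficients `c`. -/
def rq1D (c : Fin 4 → ℝ) : ℕ → ℕ → ℝ → ℝ → ℝ
  | 0, 0, x, y => rq1 c x y
  | 1, 0, x, _ => c 1 + 2 * c 3 * x
  | 0, 1, _, y => c 2 - 2 * c 3 * y
  | 2, 0, _, _ => 2 * c 3
  | 1, 1, _, _ => 0
  | 0, 2, _, _ => -(2 * c 3)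
  | _, _, _, _ => 0

/-- Integral of `f` over the subelement `T⁻ = {(x,y) ∈ T : x < d + (e−d)y}`. -/
def intTm (d e : ℝ) (f : ℝ → ℝ → ℝ) : ℝ :=
  ∫ y in (0:ℝ)..1, ∫ x in (0:ℝ)..(d + (e - d) * y), f x y

/-- Integral of `f` over the subelement `T⁺ = {(x,y) ∈ T : x > d + (e−d)y}`. -/
def intTp (d e : ℝ) (f : ℝ → ℝ → ℝ) : ℝ :=
  ∫ y in (0:ℝ)..1, ∫ x in (d + (e - d) * y)..(1:ℝ), f x y

/-- `|∇p|²` for the rotated-Q1 polynomial with coefficients `c`. -/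
def gradSq (c : Fin 4 → ℝ) (x y : ℝ) : ℝ :=
  (c 1 + 2 * c 3 * x) ^ 2 + (c 2 - 2 * c 3 * y) ^ 2

/-- The weighted energy `β⁻∫_{T⁻}|∇p⁻|² + β⁺∫_{T⁺}|∇p⁺|²`. -/
def energy (βm βp d e : ℝ) (cm cp : Fin 4 → ℝ) : ℝ :=
  βm * intTm d e (gradSq cm) + βp * intTp d e (gradSq cp)

/-!
The gradient of a rotated-Q1 polynomial `c₁ + c₂ x + c₃ y + c₄ (x² − y²)` is affine
with coefficients `(c₂, c₃, c₄)`, so every edge flux is bounded by the squared coefficients of the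
gradients of `p⁻` and `p⁺`. Wherever the interface lies, one of `T⁻`, `T⁺` contains a fixed
`1/4 × 1/2` rectangle (`[3/4,1] × [0,1/2] ⊆ T⁺` if `d ≤ 1/2`, `[0,1/4] × [0,1/2] ⊆ T⁻` otherwise),
on which the Dirichlet energy dominates these coefficients. On the other piece the coefficients
are recovered through the jump conditions: (J1) and (J2) make the tangential derivatives along
`DE` agree, (J3) matches the mean normal fluxes, and solving this `2 × 2` system costs only a
factor depending on `β⁻, β⁺`.
-/

theorem integral_add_mul_sq (p q a b : ℝ) :
    ∫ x in a..b, (p + q * x) ^ 2 =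
      (b - a) * ((p + q * (a + b) / 2) ^ 2 + q ^ 2 * (b - a) ^ 2 / 12) := by
  have hderiv : ∀ x, HasDerivAt (fun x => p ^ 2 * x + p * q * x ^ 2 + q ^ 2 * x ^ 3 / 3)
      ((p + q * x) ^ 2) x := fun x => by
    have h := (((hasDerivAt_id' x).const_mul (p ^ 2)).fun_add
      ((hasDerivAt_pow 2 x).const_mul (p * q))).fun_add
      ((hasDerivAt_pow 3 x).const_mul (q ^ 2) |>.div_const 3)
    exact h.congr_deriv (by simp only [Nat.cast_ofNat]; ring)
  rw [intervalIntegral.integral_eq_sub_of_hasDerivAt (fun x _ => hderiv x)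
    ((by fun_prop : Continuous fun x => (p + q * x) ^ 2).intervalIntegrable _ _)]
  ring

theorem integral_gradSq (c : Fin 4 → ℝ) (x₀ x₁ y : ℝ) :
    ∫ x in x₀..x₁, gradSq c x y =
      (x₁ - x₀) * ((c 1 + c 3 * (x₀ + x₁)) ^ 2 + c 3 ^ 2 * (x₁ - x₀) ^ 2 / 3
        + (c 2 - 2 * c 3 * y) ^ 2) := by
  unfold gradSq
  rw [intervalIntegral.integral_add ((by fun_prop : Continuous _).intervalIntegrable _ _)
    intervalIntegrable_const, intervalIntegral.integral_const, integral_add_mul_sq, smul_eq_mul]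
  ring

theorem integral_integral_gradSq (c : Fin 4 → ℝ) (x₀ x₁ y₀ y₁ : ℝ) :
    ∫ y in y₀..y₁, ∫ x in x₀..x₁, gradSq c x y =
      (x₁ - x₀) * (y₁ - y₀) * ((c 1 + c 3 * (x₀ + x₁)) ^ 2 + (c 2 - c 3 * (y₀ + y₁)) ^ 2
        + c 3 ^ 2 * ((x₁ - x₀) ^ 2 + (y₁ - y₀) ^ 2) / 3) := by
  have hsq : ∀ y, (c 2 - 2 * c 3 * y) ^ 2 = (c 2 + -(2 * c 3) * y) ^ 2 := fun y => by ring
  simp only [integral_gradSq, hsq]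
  rw [intervalIntegral.integral_const_mul, intervalIntegral.integral_add intervalIntegrable_const
    ((by fun_prop : Continuous _).intervalIntegrable _ _),
    intervalIntegral.integral_const, integral_add_mul_sq, smul_eq_mul]
  ring

/-- The gradient coefficients, `c₂, c₃, c₄` in the paper's indexing. -/
def coeffSq (c : Fin 4 → ℝ) : ℝ := c 1 ^ 2 + c 2 ^ 2 + c 3 ^ 2

theorem coeffSq_nonneg (c : Fin 4 → ℝ) : 0 ≤ coeffSq c := by
  unfold coeffSq; positivity

theorem coeffSq_le_integral_integral_gradSq (c : Fin 4 → ℝ) {x₀ : ℝ} (h₀ : 0 ≤ x₀)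
    (h₁ : x₀ ≤ 3 / 4) :
    coeffSq c ≤ 600 * ∫ y in (0:ℝ)..1/2, ∫ x in x₀..x₀ + 1/4, gradSq c x y := by
  rw [integral_integral_gradSq, coeffSq]
  nlinarith [sq_nonneg (c 1 + 2 * c 3 * (2 * x₀ + 1/4)), sq_nonneg (c 1 + c 3 * (2 * x₀ + 1/4)),
    sq_nonneg (c 2 - c 3 / 2), sq_nonneg (c 2 - c 3),
    mul_nonneg (sq_nonneg (c 3))
      (mul_nonneg (by linarith : 0 ≤ 3/4 - x₀) (by linarith : 0 ≤ x₀ + 1))]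

theorem continuous_parametric_intervalIntegral_lower {f : ℝ → ℝ → ℝ}
    (hf : Continuous (Function.uncurry f)) {g : ℝ → ℝ} (hg : Continuous g) (b : ℝ) :
    Continuous fun y => ∫ x in g y..b, f x y := by
  have hf' : Continuous (Function.uncurry fun y x => f x y) := hf.comp continuous_swap
  rw [show (fun y => ∫ x in g y..b, f x y) = fun y => -∫ x in b..g y, f x y from
    funext fun y => intervalIntegral.integral_symm _ _]
  exact (intervalIntegral.continuous_parametric_intervalIntegral_of_continuous hf' hg).neg

section Subelements

variable {f : ℝ → ℝ → ℝ} {d e : ℝ}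

theorem intTm_nonneg (hf₀ : ∀ x y, 0 ≤ f x y) (hd : 0 ≤ d) (he : 0 ≤ e) : 0 ≤ intTm d e f :=
  intervalIntegral.integral_nonneg zero_le_one fun y hy =>
    intervalIntegral.integral_nonneg (by nlinarith [hy.1, hy.2]) fun x _ => hf₀ x y

theorem intTp_nonneg (hf₀ : ∀ x y, 0 ≤ f x y) (hd : d ≤ 1) (he : e ≤ 1) : 0 ≤ intTp d e f :=
  intervalIntegral.integral_nonneg zero_le_one fun y hy =>
    intervalIntegral.integral_nonneg (by nlinarith [hy.1, hy.2]) fun x _ => hf₀ x y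

theorem integral_integral_le_intTp (hf : Continuous (Function.uncurry f))
    (hf₀ : ∀ x y, 0 ≤ f x y) {x₀ y₀ y₁ : ℝ} (hd : d ≤ 1) (he : e ≤ 1)
    (hy₀ : 0 ≤ y₀) (hy : y₀ ≤ y₁) (hy₁ : y₁ ≤ 1) (hx₀ : x₀ ≤ 1)
    (hsub : ∀ y ∈ Icc y₀ y₁, d + (e - d) * y ≤ x₀) :
    ∫ y in y₀..y₁, ∫ x in x₀..1, f x y ≤ intTp d e f := by
  have hfy : ∀ y, Continuous fun x => f x y := fun y =>
    hf.comp (continuous_id.prodMk continuous_const)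
  have hint : Continuous fun y => ∫ x in d + (e - d) * y..1, f x y :=
    continuous_parametric_intervalIntegral_lower hf (by fun_prop) 1
  calc ∫ y in y₀..y₁, ∫ x in x₀..1, f x y
      ≤ ∫ y in y₀..y₁, ∫ x in d + (e - d) * y..1, f x y := by
        refine intervalIntegral.integral_mono_on hy
          ((continuous_parametric_intervalIntegral_lower hf continuous_const 1).intervalIntegrable
            _ _) (hint.intervalIntegrable _ _) fun y hy => ?_
        exact intervalIntegral.integral_mono_interval (hsub y hy) hx₀ le_rfl
          (.of_forall fun x => hf₀ x y) ((hfy y).intervalIntegrable _ _)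
    _ ≤ intTp d e f := by
        refine intervalIntegral.integral_mono_interval hy₀ hy hy₁ ?_ (hint.intervalIntegrable _ _)
        refine (ae_restrict_iff' measurableSet_Ioc).2 (.of_forall fun y hy => ?_)
        exact intervalIntegral.integral_nonneg (by nlinarith [hy.1, hy.2]) fun x _ => hf₀ x y

theorem integral_integral_le_intTm (hf : Continuous (Function.uncurry f))
    (hf₀ : ∀ x y, 0 ≤ f x y) {x₁ y₀ y₁ : ℝ} (hd : 0 ≤ d) (he : 0 ≤ e)
    (hy₀ : 0 ≤ y₀) (hy : y₀ ≤ y₁) (hy₁ : y₁ ≤ 1) (hx₁ : 0 ≤ x₁)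
    (hsub : ∀ y ∈ Icc y₀ y₁, x₁ ≤ d + (e - d) * y) :
    ∫ y in y₀..y₁, ∫ x in 0..x₁, f x y ≤ intTm d e f := by
  have hfy : ∀ y, Continuous fun x => f x y := fun y =>
    hf.comp (continuous_id.prodMk continuous_const)
  have hf' : Continuous (Function.uncurry fun y x => f x y) := hf.comp continuous_swap
  have hint : Continuous fun y => ∫ x in 0..d + (e - d) * y, f x y :=
    intervalIntegral.continuous_parametric_intervalIntegral_of_continuous hf' (by fun_prop)
  calc ∫ y in y₀..y₁, ∫ x in 0..x₁, f x y
      ≤ ∫ y in y₀..y₁, ∫ x in 0..d + (e - d) * y, f x y := by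
        refine intervalIntegral.integral_mono_on hy
          ((intervalIntegral.continuous_parametric_intervalIntegral_of_continuous hf'
            continuous_const).intervalIntegrable _ _)
          (hint.intervalIntegrable _ _) fun y hy => ?_
        exact intervalIntegral.integral_mono_interval le_rfl hx₁ (hsub y hy)
          (.of_forall fun x => hf₀ x y) ((hfy y).intervalIntegrable _ _)
    _ ≤ intTm d e f := by
        refine intervalIntegral.integral_mono_interval hy₀ hy hy₁ ?_ (hint.intervalIntegrable _ _)
        refine (ae_restrict_iff' measurableSet_Ioc).2 (.of_forall fun y hy => ?_)
        exact intervalIntegral.integral_nonneg (by nlinarith [hy.1, hy.2]) fun x _ => hf₀ x y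

end Subelements

theorem continuous_uncurry_gradSq (c : Fin 4 → ℝ) : Continuous (Function.uncurry (gradSq c)) := by
  unfold gradSq; fun_prop

theorem gradSq_nonneg (c : Fin 4 → ℝ) (x y : ℝ) : 0 ≤ gradSq c x y := by
  unfold gradSq; positivity

theorem coeffSq_le_intTp (c : Fin 4 → ℝ) {d e : ℝ} (hd : d ≤ 1 / 2) (he : e ≤ 1) :
    coeffSq c ≤ 600 * intTp d e (gradSq c) := by
  calc coeffSq c ≤ 600 * ∫ y in (0:ℝ)..1/2, ∫ x in 3/4..3/4 + 1/4, gradSq c x y :=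
        coeffSq_le_integral_integral_gradSq c (by norm_num) le_rfl
    _ ≤ 600 * intTp d e (gradSq c) := by
        norm_num only
        gcongr
        refine integral_integral_le_intTp (continuous_uncurry_gradSq c) (gradSq_nonneg c)
          (by linarith) he le_rfl (by norm_num) (by norm_num) (by norm_num) fun y hy => ?_
        nlinarith [hy.1, hy.2, mul_nonneg hy.1 (sub_nonneg.2 he)]

theorem coeffSq_le_intTm (c : Fin 4 → ℝ) {d e : ℝ} (hd : 1 / 2 ≤ d) (he : 0 ≤ e) :
    coeffSq c ≤ 600 * intTm d e (gradSq c) := by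
  calc coeffSq c ≤ 600 * ∫ y in (0:ℝ)..1/2, ∫ x in 0..0 + 1/4, gradSq c x y :=
        coeffSq_le_integral_integral_gradSq c le_rfl (by norm_num)
    _ ≤ 600 * intTm d e (gradSq c) := by
        rw [zero_add]
        gcongr
        refine integral_integral_le_intTm (continuous_uncurry_gradSq c) (gradSq_nonneg c)
          (by linarith) he le_rfl (by norm_num) (by norm_num) (by norm_num) fun y hy => ?_
        nlinarith [hy.1, hy.2, mul_nonneg hy.1 he, mul_nonneg (sub_nonneg.2 hy.2) (sub_nonneg.2 hd)]

theorem J1.tangential_eq {d e : ℝ} {cm cp : Fin 4 → ℝ} (h₁ : J1 d e cm cp) (h₂ : J2 cm cp) :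
    cm 1 * (e - d) + cm 2 = cp 1 * (e - d) + cp 2 := by
  obtain ⟨hD, hE⟩ := h₁
  unfold rq1 at hD hE
  unfold J2 at h₂
  linear_combination hE - hD - (e ^ 2 - 1 - d ^ 2) * h₂

theorem fluxDefect_eq (βm βp d e : ℝ) (cm cp : Fin 4 → ℝ) :
    fluxDefect βm βp d e cm cp =
      βp * cp 1 - βm * cm 1 + 2 * e * (βp * cp 3 - βm * cm 3)
        + (d - e) * (βp * cp 2 - βm * cm 2) := by
  unfold fluxDefect
  rw [intervalIntegral.integral_congr (g := fun t : ℝ =>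
      (βp * cp 1 - βm * cm 1 + 2 * d * (βp * cp 3 - βm * cm 3)
        + (d - e) * (βp * cp 2 - βm * cm 2)) + 4 * (e - d) * (βp * cp 3 - βm * cm 3) * t)
      fun t _ => by ring]
  rw [intervalIntegral.integral_add intervalIntegrable_const
    ((continuous_const_mul _).intervalIntegrable _ _), intervalIntegral.integral_const,
    intervalIntegral.integral_const_mul, integral_id]
  ring

theorem add_add_sq_le (a b c : ℝ) : (a + b + c) ^ 2 ≤ 3 * (a ^ 2 + b ^ 2 + c ^ 2) := by
  nlinarith [sq_nonneg (a - b), sq_nonneg (b - c), sq_nonneg (a - c)]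

section Transmission

variable {β β' δ e : ℝ} {c c' : Fin 4 → ℝ}

theorem sq_mul_coeff_one_le_of_jump (hβ : 0 < β) (hβ' : 0 < β') (hδ : δ ^ 2 ≤ 1)
    (he : e ^ 2 ≤ 1) (hsolve : β * (1 + δ ^ 2) * c 1 =
      (β' + β * δ ^ 2) * c' 1 + δ * (β - β') * c' 2 + 2 * e * (β' - β) * c' 3) :
    (β * c 1) ^ 2 ≤ 12 * (β + β') ^ 2 * coeffSq c' := by
  have h₁ : (β' + β * δ ^ 2) ^ 2 ≤ (β + β') ^ 2 := by
    have : β' + β * δ ^ 2 ≤ β + β' := by nlinarith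
    gcongr
  have h₂ : (δ * (β - β')) ^ 2 ≤ (β + β') ^ 2 := by
    rw [mul_pow]
    nlinarith [mul_le_mul_of_nonneg_right hδ (sq_nonneg (β - β'))]
  have h₃ : (2 * e * (β' - β)) ^ 2 ≤ 4 * (β + β') ^ 2 := by
    rw [mul_pow, mul_pow]
    nlinarith [mul_le_mul_of_nonneg_right he (sq_nonneg (β' - β))]
  calc (β * c 1) ^ 2 ≤ (β * (1 + δ ^ 2) * c 1) ^ 2 := by
        rw [mul_pow, mul_pow, mul_pow]
        nlinarith [mul_nonneg (mul_nonneg (sq_nonneg β) (sq_nonneg (c 1))) (sq_nonneg δ)]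
    _ ≤ 3 * (((β' + β * δ ^ 2) * c' 1) ^ 2 + (δ * (β - β') * c' 2) ^ 2
          + (2 * e * (β' - β) * c' 3) ^ 2) := hsolve ▸ add_add_sq_le _ _ _
    _ ≤ 3 * ((β + β') ^ 2 * c' 1 ^ 2 + (β + β') ^ 2 * c' 2 ^ 2
          + 4 * (β + β') ^ 2 * c' 3 ^ 2) := by
        rw [mul_pow _ (c' 1), mul_pow _ (c' 2), mul_pow _ (c' 3)]
        gcongr
    _ = 12 * (β + β') ^ 2 * coeffSq c' - 9 * (β + β') ^ 2 * (c' 1 ^ 2 + c' 2 ^ 2) := by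
        unfold coeffSq; ring
    _ ≤ 12 * (β + β') ^ 2 * coeffSq c' := by
        have : 0 ≤ (β + β') ^ 2 * (c' 1 ^ 2 + c' 2 ^ 2) := by positivity
        linarith

/-- `htan` is the relation given by (J1)–(J2) and `hflux` the one given by (J3), for an interface
with `δ = e − d`. -/
theorem sq_mul_coeffSq_le_of_jump (hβ : 0 < β) (hβ' : 0 < β') (hδ : δ ^ 2 ≤ 1)
    (he : e ^ 2 ≤ 1) (hk : c 3 = c' 3) (htan : c 1 * δ + c 2 = c' 1 * δ + c' 2)
    (hflux : β' * c' 1 - β * c 1 + 2 * e * (β' * c' 3 - β * c 3)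
      - δ * (β' * c' 2 - β * c 2) = 0) :
    β ^ 2 * coeffSq c ≤ 51 * (β + β') ^ 2 * coeffSq c' := by
  have ha := sq_mul_coeff_one_le_of_jump hβ hβ' hδ he (c := c) (c' := c') (by
    linear_combination (-1) * hflux + δ * β * htan - 2 * e * β * hk)
  have hS := coeffSq_nonneg c'
  have hσ : β ^ 2 ≤ (β + β') ^ 2 := by nlinarith
  have hβS : β ^ 2 * coeffSq c' ≤ (β + β') ^ 2 * coeffSq c' := by gcongr
  have hδX : ∀ X, (δ * X) ^ 2 ≤ X ^ 2 := fun X => by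
    rw [mul_pow]; nlinarith [mul_le_mul_of_nonneg_right hδ (sq_nonneg X)]
  have hb : (β * c 2) ^ 2 ≤ 3 * ((β * c' 1) ^ 2 + (β * c 1) ^ 2 + (β * c' 2) ^ 2) := by
    have hc₂ : β * c 2 = δ * (β * c' 1) + -(δ * (β * c 1)) + β * c' 2 := by
      linear_combination β * htan
    calc (β * c 2) ^ 2 ≤ 3 * ((δ * (β * c' 1)) ^ 2 + (-(δ * (β * c 1))) ^ 2 + (β * c' 2) ^ 2) :=
          hc₂ ▸ add_add_sq_le _ _ _
      _ ≤ 3 * ((β * c' 1) ^ 2 + (β * c 1) ^ 2 + (β * c' 2) ^ 2) := by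
          rw [neg_sq]; linarith [hδX (β * c' 1), hδX (β * c 1)]
  have hfat : (β * c' 1) ^ 2 + (β * c' 2) ^ 2 + (β * c 3) ^ 2 = β ^ 2 * coeffSq c' := by
    rw [hk]; unfold coeffSq; ring
  calc β ^ 2 * coeffSq c = (β * c 1) ^ 2 + (β * c 2) ^ 2 + (β * c 3) ^ 2 := by
        unfold coeffSq; ring
    _ ≤ 51 * (β + β') ^ 2 * coeffSq c' := by linarith [sq_nonneg (β * c 3)]

end Transmission

theorem sq_mul_add_le_of_fat_of_thin {β β' S S' E A B : ℝ} (hβ : 0 < β) (hβ' : 0 < β')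
    (hA : 0 ≤ A) (hB : 0 ≤ B) (hE : 0 ≤ E)
    (hfat : β * S ≤ A * E) (hthin : β' ^ 2 * S' ≤ B * (β' + β) ^ 2 * S) :
    β ^ 2 * S + β' ^ 2 * S' ≤ A * (β + β') * (1 + B * (β + β') * (1 / β + 1 / β')) * E := by
  have hS_le : S ≤ A * E / β := by rw [le_div_iff₀ hβ]; linarith
  have h₁ : β ^ 2 * S ≤ A * (β + β') * E := by
    calc β ^ 2 * S = β * (β * S) := by ring
      _ ≤ β * (A * E) := by gcongr
      _ ≤ (β + β') * (A * E) := by gcongr; linarith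
      _ = A * (β + β') * E := by ring
  have h₂ : β' ^ 2 * S' ≤ A * (β + β') * (B * (β + β') * (1 / β + 1 / β')) * E := by
    calc β' ^ 2 * S' ≤ B * (β' + β) ^ 2 * (A * E / β) := hthin.trans (by gcongr)
      _ = A * (β + β') * (B * (β + β') * (1 / β)) * E := by ring
      _ ≤ A * (β + β') * (B * (β + β') * (1 / β + 1 / β')) * E := by
        gcongr
        linarith [one_div_pos.2 hβ']
  linarith

theorem weighted_coeffSq_le_energy {βm βp d e : ℝ} (hβm : 0 < βm) (hβp : 0 < βp)
    (hd : d ∈ Icc (0:ℝ) 1) (he : e ∈ Icc (0:ℝ) 1) {cm cp : Fin 4 → ℝ}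
    (h₁ : J1 d e cm cp) (h₂ : J2 cm cp) (h₃ : J3 βm βp d e cm cp) :
    βm ^ 2 * coeffSq cm + βp ^ 2 * coeffSq cp ≤
      600 * (βm + βp) * (1 + 51 * (βm + βp) * (1 / βm + 1 / βp)) * energy βm βp d e cm cp := by
  have htan := h₁.tangential_eq h₂
  rw [J3, fluxDefect_eq] at h₃
  have hδ : (e - d) ^ 2 ≤ 1 := by nlinarith [hd.1, hd.2, he.1, he.2]
  have he' : e ^ 2 ≤ 1 := by nlinarith [he.1, he.2]
  have hm := mul_nonneg hβm.le (intTm_nonneg (gradSq_nonneg cm) hd.1 he.1)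
  have hp := mul_nonneg hβp.le (intTp_nonneg (gradSq_nonneg cp) hd.2 he.2)
  have hE : 0 ≤ energy βm βp d e cm cp := add_nonneg hm hp
  rcases le_total d (1 / 2) with hd' | hd'
  · have hfat : βp * coeffSq cp ≤ 600 * energy βm βp d e cm cp := by
      have := mul_le_mul_of_nonneg_left (coeffSq_le_intTp cp hd' he.2) hβp.le
      unfold energy; linarith
    have hthin := sq_mul_coeffSq_le_of_jump hβm hβp hδ he' h₂ htan (by linear_combination h₃)
    calc βm ^ 2 * coeffSq cm + βp ^ 2 * coeffSq cp
        = βp ^ 2 * coeffSq cp + βm ^ 2 * coeffSq cm := add_comm _ _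
      _ ≤ 600 * (βp + βm) * (1 + 51 * (βp + βm) * (1 / βp + 1 / βm))
            * energy βm βp d e cm cp :=
          sq_mul_add_le_of_fat_of_thin hβp hβm (by norm_num) (by norm_num) hE hfat hthin
      _ = _ := by ring
  · have hfat : βm * coeffSq cm ≤ 600 * energy βm βp d e cm cp := by
      have := mul_le_mul_of_nonneg_left (coeffSq_le_intTm cm hd' he.1) hβm.le
      unfold energy; linarith
    have hthin := sq_mul_coeffSq_le_of_jump hβp hβm hδ he' h₂.symm htan.symm
      (by linear_combination -h₃)
    exact sq_mul_add_le_of_fat_of_thin hβm hβp (by norm_num) (by norm_num) hE hfat hthin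

theorem sq_add_two_mul_mul_le (a k t : ℝ) (ht : t ^ 2 ≤ 1) :
    (a + 2 * k * t) ^ 2 ≤ 5 * (a ^ 2 + k ^ 2) := by
  nlinarith [sq_nonneg (2 * t * a - k), mul_le_mul_of_nonneg_right ht
    (add_nonneg (sq_nonneg a) (sq_nonneg k))]

theorem sq_mul_rq1D_one_zero_le (β : ℝ) (c : Fin 4 → ℝ) {x : ℝ} (hx : x ^ 2 ≤ 1) (y : ℝ) :
    (β * rq1D c 1 0 x y) ^ 2 ≤ 5 * (β ^ 2 * coeffSq c) := by
  have := mul_le_mul_of_nonneg_left (sq_add_two_mul_mul_le (c 1) (c 3) x hx) (sq_nonneg β)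
  rw [rq1D, mul_pow]; unfold coeffSq; nlinarith [mul_nonneg (sq_nonneg β) (sq_nonneg (c 2))]

theorem sq_mul_rq1D_zero_one_le (β : ℝ) (c : Fin 4 → ℝ) (x : ℝ) {y : ℝ} (hy : y ^ 2 ≤ 1) :
    (β * rq1D c 0 1 x y) ^ 2 ≤ 5 * (β ^ 2 * coeffSq c) := by
  have := mul_le_mul_of_nonneg_left
    (sq_add_two_mul_mul_le (c 2) (c 3) (-y) (by rwa [neg_sq])) (sq_nonneg β)
  rw [rq1D, mul_pow, show c 2 - 2 * c 3 * y = c 2 + 2 * c 3 * -y by ring]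
  unfold coeffSq; nlinarith [mul_nonneg (sq_nonneg β) (sq_nonneg (c 1))]

theorem integral_sq_mul_rq1D_zero_one (β : ℝ) (c : Fin 4 → ℝ) (a b y : ℝ) :
    ∫ x in a..b, (β * rq1D c 0 1 x y) ^ 2 = (b - a) * (β * rq1D c 0 1 0 y) ^ 2 := by
  simp [rq1D]

theorem integral_sq_mul_rq1D_one_zero (β : ℝ) (c : Fin 4 → ℝ) (x a b : ℝ) :
    ∫ y in a..b, (β * rq1D c 1 0 x y) ^ 2 = (b - a) * (β * rq1D c 1 0 x 0) ^ 2 := by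
  simp [rq1D]

theorem horizontal_edge_flux_le {t y : ℝ} (ht : t ∈ Icc (0:ℝ) 1) (hy : y ^ 2 ≤ 1)
    (βm βp : ℝ) (cm cp : Fin 4 → ℝ) :
    (∫ x in (0:ℝ)..t, (βm * rq1D cm 0 1 x y) ^ 2)
        + (∫ x in t..(1:ℝ), (βp * rq1D cp 0 1 x y) ^ 2) ≤
      5 * (βm ^ 2 * coeffSq cm + βp ^ 2 * coeffSq cp) := by
  rw [integral_sq_mul_rq1D_zero_one, integral_sq_mul_rq1D_zero_one]
  have hm := sq_mul_rq1D_zero_one_le βm cm 0 hy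
  have hp := sq_mul_rq1D_zero_one_le βp cp 0 hy
  have hm₀ := mul_nonneg (sq_nonneg βm) (coeffSq_nonneg cm)
  have hp₀ := mul_nonneg (sq_nonneg βp) (coeffSq_nonneg cp)
  nlinarith [mul_le_mul_of_nonneg_left hm ht.1, mul_le_mul_of_nonneg_left hp (sub_nonneg.2 ht.2),
    mul_le_mul_of_nonneg_right ht.2 hm₀, mul_nonneg ht.1 hp₀]

theorem vertical_edge_flux_le {x : ℝ} (hx : x ^ 2 ≤ 1) (β : ℝ) (c : Fin 4 → ℝ) :
    ∫ y in (0:ℝ)..1, (β * rq1D c 1 0 x y) ^ 2 ≤ 5 * (β ^ 2 * coeffSq c) := by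
  rw [integral_sq_mul_rq1D_one_zero, sub_zero, one_mul]
  exact sq_mul_rq1D_one_zero_le β c hx 0

/-- Trace inequality for rotated-Q1 IFE functions, uniform in the
interface location (reference element, `h = 1`): on each of the four edges of `T`, the
squared `L²` norm of the normal flux `β ∂φ/∂ν` (taken piecewise on the cut bottom and top
edges) is bounded by `C` times the weighted energy. -/
theorem ife_trace_inequality
    (βm βp : ℝ) (hβm : 0 < βm) (hβp : 0 < βp) :
    ∃ C > 0, ∀ d ∈ Ioo (0:ℝ) 1, ∀ e ∈ Ioo (0:ℝ) 1,
      ∀ cm cp : Fin 4 → ℝ,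
        J1 d e cm cp → J2 cm cp → J3 βm βp d e cm cp →
        ((∫ x in (0:ℝ)..d, (βm * rq1D cm 0 1 x 0) ^ 2) +
            (∫ x in d..(1:ℝ), (βp * rq1D cp 0 1 x 0) ^ 2) ≤
          C * energy βm βp d e cm cp) ∧
        ((∫ y in (0:ℝ)..1, (βp * rq1D cp 1 0 1 y) ^ 2) ≤
          C * energy βm βp d e cm cp) ∧
        ((∫ x in (0:ℝ)..e, (βm * rq1D cm 0 1 x 1) ^ 2) +
            (∫ x in e..(1:ℝ), (βp * rq1D cp 0 1 x 1) ^ 2) ≤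
          C * energy βm βp d e cm cp) ∧
        ((∫ y in (0:ℝ)..1, (βm * rq1D cm 1 0 0 y) ^ 2) ≤
          C * energy βm βp d e cm cp) := by
  refine ⟨5 * (600 * (βm + βp) * (1 + 51 * (βm + βp) * (1 / βm + 1 / βp))), by positivity, ?_⟩
  rintro d hd e he cm cp h₁ h₂ h₃
  have hd' := Ioo_subset_Icc_self hd
  have he' := Ioo_subset_Icc_self he
  have hW := weighted_coeffSq_le_energy hβm hβp hd' he' h₁ h₂ h₃
  have hm₀ := mul_nonneg (sq_nonneg βm) (coeffSq_nonneg cm)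
  have hp₀ := mul_nonneg (sq_nonneg βp) (coeffSq_nonneg cp)
  refine ⟨?_, ?_, ?_, ?_⟩
  · linarith [horizontal_edge_flux_le (y := 0) hd' (by norm_num) βm βp cm cp]
  · linarith [vertical_edge_flux_le (x := 1) (by norm_num) βp cp]
  · linarith [horizontal_edge_flux_le (y := 1) he' (by norm_num) βm βp cm cp]
  · linarith [vertical_edge_flux_le (x := 0) (by norm_num) βm cm]

end
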